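/- Let η be an admissible map and let Π' ⊆ Π_η be a subset on which ρ_η is injective. Then the family consisting of the vectors ρ_η(α) for α ∈ Π' together with the vectors −ĕ_α for α ∈ Π_η ∖ Π' is a ℤ-basis of the lattice ℤ^{Π_η} of integer-valued functions on Π_η. In particular, the set S(Π') is linearly independent and the cone C_{Π'} generated by S(Π') is regular. -/

import Mathlib

open scoped RealInnerProductSpace Classical

/-!
Order `Π_η` so that the matrix whose rows are the `ρ_η α` (`α ∈ Π'`) and the `-ĕ_α`
(`α ∉ Π'`) becomes upper triangular; its diagonal entries are `η α α = 1` and `-1`, so its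
determinant is a unit of `ℤ`. Such an order exists because the support graph of the matrix is
acyclic. Rows `-ĕ_α` are sinks. Between roots of `Π'`, an off-diagonal entry `1` would by AM3 make
two rows `ρ_η` equal, so every edge `α → β` has `η α β < 0`; then `⟨α∨, β⟩ ≤ -1` by AM5, and by
integrality also `⟨β∨, α⟩ ≤ -1`, so `α` and `β` make an angle of at least `2π/3`. A set of roots
without sources or sinks would give every root two distinct such neighbours (distinct by AM4), and
then the Gram matrix of the normalised roots has nonpositive row sums: their sum vanishes,
contradicting linear independence.
-/

open Finset

theorem Finite.wellFounded_of_exists_source_or_sink {α : Type*} [Finite α] {r : α → α → Prop}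
    (h : ∀ u : Finset α, u.Nonempty → ∃ x ∈ u, (∀ y ∈ u, ¬ r x y) ∨ (∀ y ∈ u, ¬ r y x)) :
    WellFounded r := by
  have hmin : ∀ t : Finset α, t.Nonempty → ∃ m ∈ t, ∀ y ∈ t, ¬ r y m := by
    intro t
    induction t using Finset.strongInduction with
    | H t ih =>
      intro ht
      by_contra! hpred
      obtain ⟨x, hx, hsink | hsource⟩ := h t ht
      · -- removing the sink `x` keeps every vertex with an in-neighbour
        obtain ⟨y, hy, hyx⟩ := hpred x hx
        have hyx' : y ≠ x := by rintro rfl; exact hsink y hy hyx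
        obtain ⟨m, hm, hm'⟩ := ih (t.erase x) (t.erase_ssubset hx) ⟨y, mem_erase.2 ⟨hyx', hy⟩⟩
        obtain ⟨z, hz, hzm⟩ := hpred m (mem_of_mem_erase hm)
        have hzx : z ≠ x := by rintro rfl; exact hsink m (mem_of_mem_erase hm) hzm
        exact hm' z (mem_erase.2 ⟨hzx, hz⟩) hzm
      · obtain ⟨y, hy, hyx⟩ := hpred x hx
        exact hsource y hy hyx
  refine WellFounded.wellFounded_iff_has_min.2 fun s hs => ?_
  obtain ⟨m, hm, hm'⟩ := hmin (Set.toFinite s).toFinset (by simpa using hs)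
  exact ⟨m, by simpa using hm, fun y hy => hm' y (by simpa using hy)⟩

theorem Matrix.det_eq_prod_diag_of_wellFounded {ι R : Type*} [Fintype ι] [DecidableEq ι]
    [CommRing R] {M : Matrix ι ι R} (h : WellFounded fun i j => i ≠ j ∧ M i j ≠ 0) :
    M.det = ∏ i, M i i := by
  have : IsWellFounded ι fun i j => i ≠ j ∧ M i j ≠ 0 := ⟨h⟩
  let := IsWellFounded.wellOrderExtension fun i j => i ≠ j ∧ M i j ≠ 0
  refine det_of_isUpperTriangular fun i j hji => ?_
  by_contra hij
  -- the well-order extension compares `IsWellFounded.rank` first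
  have hlt : i < j := Prod.Lex.left _ _ (IsWellFounded.rank_lt_of_rel ⟨hji.ne', hij⟩)
  exact hji.not_gt hlt

section InnerProduct

variable {ι E : Type*} [NormedAddCommGroup E] [InnerProductSpace ℝ E]

theorem Finset.sum_eq_zero_of_sum_inner_nonpos {s : Finset ι} {u : ι → E}
    (h : ∀ i ∈ s, ∑ j ∈ s, ⟪u i, u j⟫ ≤ 0) : ∑ i ∈ s, u i = 0 := by
  rw [← inner_self_eq_zero (𝕜 := ℝ)]
  refine le_antisymm ?_ real_inner_self_nonneg
  rw [sum_inner]
  exact sum_nonpos fun i hi => by rw [inner_sum]; exact h i hi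

theorem inner_le_neg_half_norm_mul_norm {x y : E} (hx : x ≠ 0) (hy : y ≠ 0)
    (hxy : 2 * ⟪x, y⟫ / ⟪x, x⟫ ≤ -1) (hyx : ∃ n : ℤ, 2 * ⟪y, x⟫ / ⟪y, y⟫ = n) :
    ⟪x, y⟫ ≤ -(‖x‖ * ‖y‖) / 2 := by
  obtain ⟨n, hn⟩ := hyx
  have hx' : 0 < ‖x‖ := norm_pos_iff.2 hx
  have hy' : 0 < ‖y‖ := norm_pos_iff.2 hy
  rw [real_inner_self_eq_norm_sq, div_le_iff₀ (by positivity)] at hxy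
  rw [real_inner_self_eq_norm_sq, real_inner_comm, div_eq_iff (by positivity)] at hn
  have hn' : (n : ℝ) ≤ -1 := by
    have : (n : ℝ) < 0 := by nlinarith
    have : n < 0 := by exact_mod_cast this
    exact_mod_cast Int.le_sub_one_of_lt this
  have hyy : 2 * ⟪x, y⟫ ≤ -‖y‖ ^ 2 := by
    rw [hn]; nlinarith [pow_pos hy' 2]
  nlinarith [sq_nonneg (‖x‖ - ‖y‖)]

theorem LinearIndependent.finset_eq_empty_of_forall_two_neighbours {v : ι → E}
    (hv : LinearIndependent ℝ v) {s : Finset ι}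
    (hobtuse : ∀ i ∈ s, ∀ j ∈ s, i ≠ j → ⟪v i, v j⟫ ≤ 0)
    (hnbr : ∀ i ∈ s, ∃ j ∈ s, ∃ k ∈ s, j ≠ k ∧
      ⟪v i, v j⟫ ≤ -(‖v i‖ * ‖v j‖) / 2 ∧ ⟪v i, v k⟫ ≤ -(‖v i‖ * ‖v k‖) / 2) :
    s = ∅ := by
  have hnorm : ∀ i, 0 < ‖v i‖ := fun i => norm_pos_iff.2 (hv.ne_zero i)
  set u : ι → E := fun i => ‖v i‖⁻¹ • v i
  have hu : ∀ i j, ⟪u i, u j⟫ = ⟪v i, v j⟫ / (‖v i‖ * ‖v j‖) := by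
    intro i j
    simp only [u, real_inner_smul_left, real_inner_smul_right]
    field_simp
  have hwide : ∀ i j, ⟪v i, v j⟫ ≤ -(‖v i‖ * ‖v j‖) / 2 → j ≠ i ∧ ⟪u i, u j⟫ ≤ -1 / 2 := by
    intro i j h
    refine ⟨?_, ?_⟩
    · intro hji
      rw [hji, real_inner_self_eq_norm_mul_norm] at h
      nlinarith [hnorm i]
    · rw [hu, div_le_iff₀ (mul_pos (hnorm i) (hnorm j))]
      linarith
  -- each row of the Gram matrix of the `u i` is `1 - 1/2 - 1/2 + (nonpositive terms)`
  have hrow : ∀ i ∈ s, ∑ j ∈ s, ⟪u i, u j⟫ ≤ 0 := by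
    intro i hi
    obtain ⟨j, hj, k, hk, hjk, hij, hik⟩ := hnbr i hi
    obtain ⟨hji, hij⟩ := hwide i j hij
    obtain ⟨hki, hik⟩ := hwide i k hik
    have hii : ⟪u i, u i⟫ = 1 := by
      rw [hu, real_inner_self_eq_norm_mul_norm, div_self (mul_pos (hnorm i) (hnorm i)).ne']
    have hrest : ∑ l ∈ ((s.erase i).erase j).erase k, ⟪u i, u l⟫ ≤ 0 := by
      refine sum_nonpos fun l hl => ?_
      rw [hu]
      exact div_nonpos_of_nonpos_of_nonneg
        (hobtuse i hi l (mem_of_mem_erase (mem_of_mem_erase (mem_of_mem_erase hl)))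
          (ne_of_mem_erase (mem_of_mem_erase (mem_of_mem_erase hl))).symm)
        (mul_pos (hnorm i) (hnorm l)).le
    rw [← add_sum_erase s _ hi, ← add_sum_erase _ _ (mem_erase.2 ⟨hji, hj⟩),
      ← add_sum_erase _ _ (mem_erase.2 ⟨hjk.symm, mem_erase.2 ⟨hki, hk⟩⟩)]
    linarith
  have hsum : ∑ i ∈ s, ‖v i‖⁻¹ • v i = 0 := sum_eq_zero_of_sum_inner_nonpos hrow
  refine eq_empty_of_forall_notMem fun i hi => ?_
  exact inv_ne_zero (hnorm i).ne' (linearIndependent_iff'.1 hv s _ hsum i hi)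

end InnerProduct

theorem eta_nonpos_of_ne {E : Type*} {P Pη P' : Finset E} {η : E → E → ℤ}
    (hle : ∀ α ∈ P, ∀ β ∈ P, η α β ≤ 1)
    (am3 : ∀ α ∈ P, ∀ β ∈ P, η α β = 1 → ∀ γ ∈ P, η α γ = η β γ)
    (hPηP : Pη ⊆ P) (hP'P : P' ⊆ P)
    (hinj : ∀ α ∈ P', ∀ β ∈ P', (∀ γ ∈ Pη, η α γ = η β γ) → α = β)
    {α β : E} (hα : α ∈ P') (hβ : β ∈ P') (hne : α ≠ β) : η α β ≤ 0 := by
  by_contra! hpos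
  have h1 : η α β = 1 := le_antisymm (hle α (hP'P hα) β (hP'P hβ)) hpos
  exact hne (hinj α hα β hβ fun γ hγ => am3 α (hP'P hα) β (hP'P hβ) h1 γ (hPηP hγ))

/-- Row `a` is `ρ_η a` if `a ∈ P'` and `-ĕ_a` otherwise. -/
noncomputable def familyMatrix {E : Type*} (η : E → E → ℤ) (Pη P' : Finset E) : Matrix Pη Pη ℤ :=
  fun a γ => if (a : E) ∈ P' then η a γ else if γ = a then -1 else 0

theorem familyMatrix_wellFounded {E : Type*} [NormedAddCommGroup E] [InnerProductSpace ℝ E]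
    {P Pη P' : Finset E} {η : E → E → ℤ}
    (hli : LinearIndependent ℝ (fun a : P => (a : E)))
    (hobtuse : ∀ α ∈ P, ∀ β ∈ P, α ≠ β → ⟪α, β⟫ ≤ 0)
    (hcart : ∀ α ∈ P, ∀ β ∈ P, α ≠ β → ∃ n : ℤ, 2 * ⟪α, β⟫ / ⟪α, α⟫ = (n : ℝ))
    (am4 : ∀ α ∈ P, ∀ β ∈ P, η α β < 0 → η β α = 0)
    (am5 : ∀ α ∈ P, ∀ β ∈ P, α ≠ β → 2 * ⟪α, β⟫ / ⟪α, α⟫ ≤ (η α β : ℝ))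
    (hPηP : Pη ⊆ P) (hP'nonpos : ∀ α ∈ P', ∀ β ∈ P', α ≠ β → η α β ≤ 0) :
    WellFounded fun a b => a ≠ b ∧ familyMatrix η Pη P' a b ≠ 0 := by
  refine Finite.wellFounded_of_exists_source_or_sink fun u hu => ?_
  by_cases hsink : ∃ a ∈ u, (a : E) ∉ P'
  · obtain ⟨a, ha, haP'⟩ := hsink
    refine ⟨a, ha, Or.inl fun b _ ⟨hab, hM⟩ => hM ?_⟩
    simp [familyMatrix, haP', Ne.symm hab]
  push Not at hsink
  by_contra! hcycle
  have hneg : ∀ a ∈ u, ∀ b ∈ u, a ≠ b ∧ familyMatrix η Pη P' a b ≠ 0 →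
      (a : E) ≠ b ∧ η a b < 0 := by
    rintro a ha b hb ⟨hab, hM⟩
    simp only [familyMatrix, if_pos (hsink a ha)] at hM
    have hab' : (a : E) ≠ b := Subtype.coe_injective.ne hab
    exact ⟨hab', (hP'nonpos _ (hsink a ha) _ (hsink b hb) hab').lt_of_ne hM⟩
  have hwide : ∀ α ∈ P, ∀ β ∈ P, α ≠ β → η α β < 0 → ⟪α, β⟫ ≤ -(‖α‖ * ‖β‖) / 2 := by
    intro α hα β hβ hne hη
    have hη' : (η α β : ℝ) ≤ -1 := by exact_mod_cast Int.le_sub_one_of_lt hη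
    exact inner_le_neg_half_norm_mul_norm (hli.ne_zero ⟨α, hα⟩) (hli.ne_zero ⟨β, hβ⟩)
      ((am5 α hα β hβ hne).trans hη') (hcart β hβ α hα hne.symm)
  have hv : LinearIndependent ℝ (fun a : Pη => (a : E)) :=
    hli.comp (fun a : Pη => (⟨a, hPηP a.2⟩ : P)) fun a b h => Subtype.ext (Subtype.mk.inj h)
  refine hu.ne_empty (hv.finset_eq_empty_of_forall_two_neighbours
    (fun a _ b _ hab => hobtuse _ (hPηP a.2) _ (hPηP b.2) (Subtype.coe_injective.ne hab))
    fun a ha => ?_)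
  obtain ⟨⟨b, hb, hab⟩, ⟨c, hc, hca⟩⟩ := hcycle a ha
  obtain ⟨hab, hηab⟩ := hneg a ha b hb hab
  obtain ⟨hca, hηca⟩ := hneg c hc a ha hca
  refine ⟨b, hb, c, hc, ?_, hwide _ (hPηP a.2) _ (hPηP b.2) hab hηab, ?_⟩
  · rintro rfl
    have := am4 _ (hPηP a.2) _ (hPηP b.2) hηab
    omega
  · rw [real_inner_comm, mul_comm]
    exact hwide _ (hPηP c.2) _ (hPηP a.2) hca hηca

theorem admissible_map_family_is_basis_general
    {E : Type*} [NormedAddCommGroup E] [InnerProductSpace ℝ E]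
    (P : Finset E)
    (hli : LinearIndependent ℝ (fun a : P => (a : E)))
    (hobtuse : ∀ α ∈ P, ∀ β ∈ P, α ≠ β → ⟪α, β⟫ ≤ 0)
    (hcart : ∀ α ∈ P, ∀ β ∈ P, α ≠ β → ∃ n : ℤ, 2 * ⟪α, β⟫ / ⟪α, α⟫ = (n : ℝ))
    (η : E → E → ℤ)
    (hval : ∀ α ∈ P, ∀ β ∈ P, η α β ∈ ({-3, -2, -1, 0, 1} : Set ℤ))
    (am3 : ∀ α ∈ P, ∀ β ∈ P, η α β = 1 → ∀ γ ∈ P, η α γ = η β γ)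
    (am4 : ∀ α ∈ P, ∀ β ∈ P, η α β < 0 → η β α = 0)
    (am5 : ∀ α ∈ P, ∀ β ∈ P, α ≠ β → 2 * ⟪α, β⟫ / ⟪α, α⟫ ≤ (η α β : ℝ))
    (Pη : Finset E) (hPη : ∀ α, α ∈ Pη ↔ α ∈ P ∧ η α α = 1)
    (P' : Finset E) (hP'sub : P' ⊆ Pη)
    (hinj : ∀ α ∈ P', ∀ β ∈ P', (∀ γ ∈ Pη, η α γ = η β γ) → α = β) :
    ∃ B : Module.Basis {x // x ∈ Pη} ℤ ({x // x ∈ Pη} → ℤ),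
      ∀ a : {x // x ∈ Pη},
        ((a : E) ∈ P' → ∀ γ : {x // x ∈ Pη}, B a γ = η (a : E) (γ : E)) ∧
        ((a : E) ∉ P' → ∀ γ : {x // x ∈ Pη}, B a γ = if γ = a then -1 else 0) := by
  have hPηP : Pη ⊆ P := fun α hα => ((hPη α).1 hα).1
  have hle : ∀ α ∈ P, ∀ β ∈ P, η α β ≤ 1 := fun α hα β hβ => by
    have := hval α hα β hβ
    simp only [Set.mem_insert_iff, Set.mem_singleton_iff] at this
    omega
  have hwf := familyMatrix_wellFounded hli hobtuse hcart am4 am5 hPηP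
    fun α hα β hβ => eta_nonpos_of_ne hle am3 hPηP (hP'sub.trans hPηP) hinj hα hβ
  have hdet : IsUnit (familyMatrix η Pη P').det := by
    rw [Matrix.det_eq_prod_diag_of_wellFounded hwf, IsUnit.prod_iff]
    intro a _
    by_cases ha : (a : E) ∈ P' <;> simp [familyMatrix, ha, ((hPη a).1 a.2).2]
  obtain ⟨hliB, hspan⟩ := (Pi.basisFun ℤ Pη).is_basis_iff_det
    (v := fun a => familyMatrix η Pη P' a) |>.2 (by rwa [Pi.basisFun_det_apply])
  refine ⟨Module.Basis.mk hliB hspan.ge, fun a => ⟨fun ha γ => ?_, fun ha γ => ?_⟩⟩ <;>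
    simp [Module.Basis.mk_apply, familyMatrix, ha]

/-- Let `η` be an admissible map on a set `P` of simple roots, set
`Pη = {α ∈ P : η α α = 1}`, and let `P' ⊆ Pη` be a subset on which `ρ_η` is injective.
Then the family consisting of the vectors `ρ_η α` (for `α ∈ P'`) and `−ĕ_α`
(for `α ∈ Pη \ P'`) is a ℤ-basis of the lattice `ℤ^{Pη}` of integer-valued functions
on `Pη`.  In particular `S(P')` is linearly independent and the cone it generates is
regular. -/
theorem admissible_map_family_is_basis
    {E : Type*} [NormedAddCommGroup E] [InnerProductSpace ℝ E]
    (P : Finset E)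
    (h0 : ∀ α ∈ P, α ≠ (0 : E))
    (hli : LinearIndependent ℝ (fun a : P => (a : E)))
    (hobtuse : ∀ α ∈ P, ∀ β ∈ P, α ≠ β → ⟪α, β⟫ ≤ 0)
    (hcart : ∀ α ∈ P, ∀ β ∈ P, α ≠ β → ∃ n : ℤ, 2 * ⟪α, β⟫ / ⟪α, α⟫ = (n : ℝ))
    (η : E → E → ℤ)
    (hval : ∀ α ∈ P, ∀ β ∈ P, η α β ∈ ({-3, -2, -1, 0, 1} : Set ℤ))
    (am1 : ∀ α ∈ P, η α α = 0 ∨ η α α = 1)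
    (am2 : ∀ α ∈ P, η α α = 0 → ∀ β ∈ P, η α β = 0 ∧ η β α = 0)
    (am3 : ∀ α ∈ P, ∀ β ∈ P, η α β = 1 → ∀ γ ∈ P, η α γ = η β γ)
    (am4 : ∀ α ∈ P, ∀ β ∈ P, η α β < 0 → η β α = 0)
    (am5 : ∀ α ∈ P, ∀ β ∈ P, α ≠ β → 2 * ⟪α, β⟫ / ⟪α, α⟫ ≤ (η α β : ℝ))
    (Pη : Finset E) (hPη : ∀ α, α ∈ Pη ↔ α ∈ P ∧ η α α = 1)
    (P' : Finset E) (hP'sub : P' ⊆ Pη)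
    (hinj : ∀ α ∈ P', ∀ β ∈ P', (∀ γ ∈ Pη, η α γ = η β γ) → α = β) :
    ∃ B : Module.Basis {x // x ∈ Pη} ℤ ({x // x ∈ Pη} → ℤ),
      ∀ a : {x // x ∈ Pη},
        ((a : E) ∈ P' → ∀ γ : {x // x ∈ Pη}, B a γ = η (a : E) (γ : E)) ∧
        ((a : E) ∉ P' → ∀ γ : {x // x ∈ Pη}, B a γ = if γ = a then -1 else 0) :=
  admissible_map_family_is_basis_general P hli hobtuse hcart η hval am3 am4 am5 Pη hPη P' hP'sub
    hinj
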